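/- Consider the orthogonal series. If N = 2n (series D_n), assume in addition that q_{ab} = r whenever at least one of the indices a, b equals n or n+1, and let 𝒟 be the N×N permutation matrix exchanging the indices n and n+1 and fixing all others. If N = 2n+1 (series B_n), let 𝒟 be the diagonal N×N matrix with entry −1 in position n₂ = (N+1)/2 and +1 elsewhere, with no further restriction on the parameters. Then in both cases 𝒟² = Id, (𝒟 ⊗ 𝒟) R (𝒟 ⊗ 𝒟) = R (explicitly Σ_{e,f,g,h} 𝒟^a{}_e 𝒟^b{}_f R^{ef}_{gh} 𝒟^g{}_c 𝒟^h{}_d = R^{ab}_{cd} for all a,b,c,d), and 𝒟 C 𝒟 = C, where C = (C_{ab}) is the metric matrix. (These identities show that T ↦ 𝒟T𝒟⁻¹ is compatible with the RTT and orthogonality relations, underlying the involutive automorphism ♯ of SO_{q,r}(N).) -/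
import Mathlib


open Finset

/-- The three series `B_n` (N = 2n+1, ε = +1), `C_n` (N = 2n, ε = −1),
`D_n` (N = 2n, ε = +1). -/
inductive BCDSeries : Type
  | B : BCDSeries
  | C : BCDSeries
  | D : BCDSeries
deriving DecidableEq

/-- Kronecker delta with values in `ℂ`. -/
def kd {α : Type*} [DecidableEq α] (a b : α) : ℂ := if a = b then 1 else 0

/-- The dimension `N` of the fundamental representation. -/
def bigN : BCDSeries → ℕ → ℕ
  | BCDSeries.B, n => 2 * n + 1
  | BCDSeries.C, n => 2 * n
  | BCDSeries.D, n => 2 * n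

/-- The sign `ε`: `+1` for the orthogonal series `B_n, D_n`, `−1` for the symplectic
series `C_n`. -/
def epsZ : BCDSeries → ℤ
  | BCDSeries.B => 1
  | BCDSeries.C => -1
  | BCDSeries.D => 1

/-- The sign `ε` as a complex number. -/
noncomputable def epsC (S : BCDSeries) : ℂ := (epsZ S : ℂ)

/-- `ε_a` (for the 0-based index `i`, paper index `i+1`): `+1` for `B_n, D_n`; for `C_n`
it is `+1` for paper index `≤ n` and `−1` for paper index `> n`. -/
def epsA (S : BCDSeries) (n i : ℕ) : ℂ :=
  match S with
  | BCDSeries.C => if i < n then 1 else -1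
  | _ => 1

/-- `2·ρ_a ∈ ℤ` for the 0-based index `i` (paper index `i+1`); `ρ` is the vector
`(N/2−1, …, 1/2, 0, −1/2, …, −N/2+1)` for `B_n`, `(N/2, …, 1, −1, …, −N/2)` for `C_n`,
and `(N/2−1, …, 1, 0, 0, −1, …, −N/2+1)` for `D_n`. -/
def twoRho (S : BCDSeries) (n i : ℕ) : ℤ :=
  match S with
  | BCDSeries.B =>
      if i < n then (2 * n + 1 : ℤ) - 2 * (i + 1)
      else if i = n then 0
      else (2 * n + 3 : ℤ) - 2 * (i + 1)
  | BCDSeries.C =>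
      if i < n then (2 * n + 2 : ℤ) - 2 * (i + 1) else (2 * n : ℤ) - 2 * (i + 1)
  | BCDSeries.D =>
      if i < n then (2 * n : ℤ) - 2 * (i + 1) else (2 * n + 2 : ℤ) - 2 * (i + 1)

/-- `δ^{a n₂}` as a complex number: for `B_n` it is 1 iff the 0-based index `i` equals `n`
(paper index `n₂ = (N+1)/2 = n+1`); for `C_n, D_n` there is no index `n₂` and it is 0. -/
def isN2 (S : BCDSeries) (n i : ℕ) : ℂ :=
  match S with
  | BCDSeries.B => if i = n then 1 else 0
  | _ => 0

/-- The primed index `a' = N+1−a` (in 0-based indexing, `a' = N−1−a`). -/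
def pr {N : ℕ} (a : Fin N) : Fin N := ⟨N - 1 - a.val, by have := a.isLt; omega⟩

/-- The metric `C_{ab} = ε_a r^{−ρ_a} δ_{a b'}`, where `r^ρ := s^{2ρ}` for a fixed square
root `s` of `r`. -/
noncomputable def Cmet (S : BCDSeries) (n : ℕ) (s : ℂ)
    (a b : Fin (bigN S n)) : ℂ :=
  epsA S n a.val * s ^ (-(twoRho S n a.val)) * kd b (pr a)

/-- The inverse metric `C^{ab} = ε C_{ab}`. -/
noncomputable def Cup (S : BCDSeries) (n : ℕ) (s : ℂ)
    (a b : Fin (bigN S n)) : ℂ :=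
  epsC S * Cmet S n s a b

/-- The multiparametric `B,C,D` R-matrix
`R^{ab}_{cd} = δ^a_c δ^b_d [r/q_{ab} + (r−1)δ^{ab} + (r⁻¹−1)δ^{a b'}](1−δ^{a n₂})
  + δ^a_{n₂} δ^b_{n₂} δ^{n₂}_c δ^{n₂}_d
  + (r−r⁻¹)[θ^{ab} δ^b_c δ^a_d − ε_a ε_c θ^{ac} r^{ρ_a−ρ_c} δ^{a'b} δ_{c'd}]`,
with `θ^{ab} = 1` iff `a > b`, and `r^ρ := s^{2ρ}`.  Indices are 0-based. -/
noncomputable def Rbcd (S : BCDSeries) (n : ℕ) (r s : ℂ)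
    (q : Fin (bigN S n) → Fin (bigN S n) → ℂ)
    (a b c d : Fin (bigN S n)) : ℂ :=
  kd a c * kd b d *
      (r / q a b + (r - 1) * kd a b + (r⁻¹ - 1) * kd b (pr a)) * (1 - isN2 S n a.val)
    + isN2 S n a.val * isN2 S n b.val * isN2 S n c.val * isN2 S n d.val
    + (r - r⁻¹) *
        ((if b < a then (1 : ℂ) else 0) * kd b c * kd a d
          - epsA S n a.val * epsA S n c.val * (if c < a then (1 : ℂ) else 0) *
              s ^ (twoRho S n a.val - twoRho S n c.val) * kd b (pr a) * kd d (pr c))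

/-- `R̂^{ab}_{cd} := R^{ba}_{cd}`. -/
noncomputable def RbcdHat (S : BCDSeries) (n : ℕ) (r s : ℂ)
    (q : Fin (bigN S n) → Fin (bigN S n) → ℂ)
    (a b c d : Fin (bigN S n)) : ℂ :=
  Rbcd S n r s q b a c d

/-- The R-matrix with all deformation parameters inverted, `R_{q⁻¹,r⁻¹}` (also the chosen
square root `s` of `r` is replaced by `s⁻¹`). -/
noncomputable def RbcdInv (S : BCDSeries) (n : ℕ) (r s : ℂ)
    (q : Fin (bigN S n) → Fin (bigN S n) → ℂ)
    (a b c d : Fin (bigN S n)) : ℂ :=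
  Rbcd S n r⁻¹ s⁻¹ (fun x y => (q x y)⁻¹) a b c d

/-- The entries of the matrix `𝒟` (0-based indices `i, j`): for `B_n` it is the diagonal
matrix with entry `−1` in position `n₂` (paper index `n+1`, 0-based `n`) and `+1`
elsewhere; for `D_n` it is the permutation matrix exchanging the indices `n` and `n+1`
(0-based `n−1` and `n`) and fixing all others.  (The `C_n` branch, which is never used,
is set to the identity.) -/
noncomputable def DmatE (S : BCDSeries) (n i j : ℕ) : ℂ :=
  match S with
  | BCDSeries.B => if i = j then (if i = n then -1 else 1) else 0
  | BCDSeries.C => if i = j then 1 else 0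
  | BCDSeries.D =>
      if i = n - 1 then (if j = n then 1 else 0)
      else if i = n then (if j = n - 1 then 1 else 0)
      else if i = j then 1 else 0

/-- The matrix `𝒟` on `Fin (bigN S n)`. -/
noncomputable def Dmat (S : BCDSeries) (n : ℕ) (a b : Fin (bigN S n)) : ℂ :=
  DmatE S n a.val b.val

section AuxGen

variable {N : ℕ}

lemma kd_self (x : Fin N) : kd x x = 1 := by simp [kd]

lemma kd_of_ne {x y : Fin N} (h : x ≠ y) : kd x y = 0 := by simp [kd, h]

lemma pr_pr (x : Fin N) : pr (pr x) = x := by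
  have h := x.isLt
  apply Fin.ext
  simp only [pr]
  omega

lemma pair_collapse (w : Fin N → ℂ) (σ : Fin N → Fin N) (hσ : Function.Involutive σ)
    (D : Fin N → Fin N → ℂ) (hD : ∀ x y, D x y = w x * kd (σ x) y) (a b : Fin N) :
    (∑ c, D a c * D c b) = w a * w (σ a) * kd a b := by
  refine (Fintype.sum_eq_single (σ a)
    (fun c hc => by rw [hD a c, kd_of_ne (Ne.symm hc)]; ring)).trans ?_
  rw [hD a (σ a), hD (σ a) b, kd_self, hσ a]
  ring

lemma met_collapse (w : Fin N → ℂ) (σ : Fin N → Fin N) (hσ : Function.Involutive σ)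
    (D : Fin N → Fin N → ℂ) (hD : ∀ x y, D x y = w x * kd (σ x) y)
    (M : Fin N → Fin N → ℂ) (a b : Fin N) :
    (∑ c, ∑ d, D a c * M c d * D d b) = w a * w (σ b) * M (σ a) (σ b) := by
  refine (Fintype.sum_eq_single (σ a)
    (fun c hc => by simp [hD a c, kd_of_ne (Ne.symm hc)])).trans ?_
  refine (Fintype.sum_eq_single (σ b)
    (fun d hd => by
      have : σ d ≠ b := fun hh => hd (by rw [← hh, hσ d])
      rw [hD d b, kd_of_ne this]; ring)).trans ?_
  rw [hD a (σ a), hD (σ b) b, kd_self, hσ b, kd_self]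
  ring

lemma quad_collapse (w : Fin N → ℂ) (σ : Fin N → Fin N) (hσ : Function.Involutive σ)
    (D : Fin N → Fin N → ℂ) (hD : ∀ x y, D x y = w x * kd (σ x) y)
    (R : Fin N → Fin N → Fin N → Fin N → ℂ) (a b c d : Fin N) :
    (∑ e, ∑ f, ∑ g, ∑ h, D a e * D b f * R e f g h * D g c * D h d)
      = w a * w b * w (σ c) * w (σ d) * R (σ a) (σ b) (σ c) (σ d) := by
  refine (Fintype.sum_eq_single (σ a)
    (fun e he => by simp [hD a e, kd_of_ne (Ne.symm he)])).trans ?_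
  refine (Fintype.sum_eq_single (σ b)
    (fun f hf => by simp [hD b f, kd_of_ne (Ne.symm hf)])).trans ?_
  refine (Fintype.sum_eq_single (σ c)
    (fun g hg => by
      have : σ g ≠ c := fun hh => hg (by rw [← hh, hσ g])
      simp [hD g c, kd_of_ne this])).trans ?_
  refine (Fintype.sum_eq_single (σ d)
    (fun h hh => by
      have : σ h ≠ d := fun hh2 => hh (by rw [← hh2, hσ h])
      simp [hD h d, kd_of_ne this])).trans ?_
  rw [hD a (σ a), hD b (σ b), hD (σ c) c, hD (σ d) d, hσ c, hσ d,
    kd_self, kd_self, kd_self, kd_self]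
  ring

end AuxGen

section AuxB

/-- weight for the B series -/
noncomputable def wB (n : ℕ) (x : Fin (bigN BCDSeries.B n)) : ℂ :=
  if x.val = n then -1 else 1

lemma wB_sq (n : ℕ) (x : Fin (bigN BCDSeries.B n)) : wB n x * wB n x = 1 := by
  unfold wB; split_ifs <;> norm_num

lemma prB_val (n : ℕ) (x : Fin (bigN BCDSeries.B n)) : (pr x).val = 2 * n - x.val := by
  have hb : bigN BCDSeries.B n = 2 * n + 1 := rfl
  simp only [pr]
  omega

lemma wB_pr (n : ℕ) (x : Fin (bigN BCDSeries.B n)) : wB n (pr x) = wB n x := by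
  have h : x.val < 2 * n + 1 := x.isLt
  unfold wB
  rw [prB_val]
  by_cases hx : x.val = n
  · rw [if_pos (by omega), if_pos hx]
  · rw [if_neg (by omega), if_neg hx]

lemma DmatB (n : ℕ) (x y : Fin (bigN BCDSeries.B n)) :
    Dmat BCDSeries.B n x y = wB n x * kd x y := by
  by_cases h : x = y
  · subst h; simp [Dmat, DmatE, wB, kd]
  · have h' : x.val ≠ y.val := fun e => h (Fin.ext e)
    simp [Dmat, DmatE, wB, kd, h, h']

lemma LB1 (n : ℕ) (a b c d : Fin (bigN BCDSeries.B n)) :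
    wB n a * wB n b * wB n c * wB n d * (kd a c * kd b d) = kd a c * kd b d := by
  by_cases h1 : a = c
  · by_cases h2 : b = d
    · subst h1; subst h2
      rw [kd_self, kd_self]
      linear_combination (wB n b * wB n b) * wB_sq n a + wB_sq n b
    · rw [kd_of_ne h2]; ring
  · rw [kd_of_ne h1]; ring

lemma LB2 (n : ℕ) (a b c d : Fin (bigN BCDSeries.B n)) :
    wB n a * wB n b * wB n c * wB n d *
      (isN2 BCDSeries.B n a.val * isN2 BCDSeries.B n b.val * isN2 BCDSeries.B n c.val *
        isN2 BCDSeries.B n d.val)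
    = isN2 BCDSeries.B n a.val * isN2 BCDSeries.B n b.val * isN2 BCDSeries.B n c.val *
        isN2 BCDSeries.B n d.val := by
  have hi : ∀ i : ℕ, isN2 BCDSeries.B n i = if i = n then 1 else 0 := fun _ => rfl
  simp only [hi, wB]
  by_cases ha : a.val = n <;> by_cases hb : b.val = n <;> by_cases hc : c.val = n <;>
    by_cases hd : d.val = n <;> simp [ha, hb, hc, hd] <;> ring

lemma LB4 (n : ℕ) (a b c d : Fin (bigN BCDSeries.B n)) :
    wB n a * wB n b * wB n c * wB n d * (kd b (pr a) * kd d (pr c))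
      = kd b (pr a) * kd d (pr c) := by
  by_cases h1 : b = pr a
  · by_cases h2 : d = pr c
    · have w1 : wB n b = wB n a := by rw [h1, wB_pr]
      have w2 : wB n d = wB n c := by rw [h2, wB_pr]
      rw [w1, w2]
      linear_combination (kd b (pr a) * kd d (pr c) * (wB n c * wB n c)) * wB_sq n a +
        (kd b (pr a) * kd d (pr c)) * wB_sq n c
    · rw [kd_of_ne h2]; ring
  · rw [kd_of_ne h1]; ring

end AuxB

section AuxD

/-- the permutation exchanging indices n-1 and n (0-based) for the D series -/
def sigD (n : ℕ) (x : Fin (bigN BCDSeries.D n)) : Fin (bigN BCDSeries.D n) :=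
  ⟨if x.val = n - 1 then n else if x.val = n then n - 1 else x.val, by
    have h : x.val < 2 * n := x.isLt
    show _ < 2 * n
    split_ifs <;> omega⟩

lemma sigD_val (n : ℕ) (x : Fin (bigN BCDSeries.D n)) :
    (sigD n x).val = if x.val = n - 1 then n else if x.val = n then n - 1 else x.val := rfl

lemma sigD_invol (n : ℕ) : Function.Involutive (sigD n) := by
  intro x
  have hx : x.val < 2 * n := x.isLt
  apply Fin.ext
  simp only [sigD_val]
  split_ifs <;> omega

lemma prD_val (n : ℕ) (x : Fin (bigN BCDSeries.D n)) : (pr x).val = 2 * n - 1 - x.val := by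
  have hb : bigN BCDSeries.D n = 2 * n := rfl
  simp only [pr]
  omega

lemma sigD_pr (n : ℕ) (x : Fin (bigN BCDSeries.D n)) : pr (sigD n x) = sigD n (pr x) := by
  have hx : x.val < 2 * n := x.isLt
  apply Fin.ext
  rw [prD_val, sigD_val, sigD_val, prD_val]
  split_ifs <;> omega

lemma kd_sigD (n : ℕ) (x y : Fin (bigN BCDSeries.D n)) :
    kd (sigD n x) (sigD n y) = kd x y := by
  by_cases h : x = y
  · rw [h, kd_self, kd_self]
  · rw [kd_of_ne h, kd_of_ne (fun e => h ((sigD_invol n).injective e))]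

lemma isN2D (n i : ℕ) : isN2 BCDSeries.D n i = 0 := rfl

lemma epsAD (n i : ℕ) : epsA BCDSeries.D n i = 1 := rfl

lemma twoRhoD (n i : ℕ) :
    twoRho BCDSeries.D n i =
      if i < n then (2 * n : ℤ) - 2 * (i + 1) else (2 * n + 2 : ℤ) - 2 * (i + 1) := rfl

lemma twoRhoD_sig (n : ℕ) (x : Fin (bigN BCDSeries.D n)) :
    twoRho BCDSeries.D n (sigD n x).val = twoRho BCDSeries.D n x.val := by
  have hx : x.val < 2 * n := x.isLt
  rw [twoRhoD, twoRhoD, sigD_val]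
  split_ifs <;> omega

lemma twoRho0D (n : ℕ) (x : Fin (bigN BCDSeries.D n)) (h : x.val = n - 1 ∨ x.val = n) :
    twoRho BCDSeries.D n x.val = 0 := by
  have hx : x.val < 2 * n := x.isLt
  rw [twoRhoD]
  split_ifs <;> omega

lemma theta_flip (n : ℕ) (x y : Fin (bigN BCDSeries.D n)) :
    ((sigD n y < sigD n x) ↔ (y < x)) ∨
      ((x.val = n - 1 ∧ y.val = n) ∨ (x.val = n ∧ y.val = n - 1)) := by
  have hx : x.val < 2 * n := x.isLt
  have hy : y.val < 2 * n := y.isLt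
  simp only [Fin.lt_def, sigD_val]
  split_ifs <;> omega

lemma DmatD (n : ℕ) (x y : Fin (bigN BCDSeries.D n)) :
    Dmat BCDSeries.D n x y = (1 : ℂ) * kd (sigD n x) y := by
  rw [one_mul]
  have hx : x.val < 2 * n := x.isLt
  simp only [Dmat, DmatE, kd, Fin.ext_iff, sigD_val]
  split_ifs <;> first | rfl | omega

lemma qsigD (n : ℕ) (r : ℂ) (q : Fin (bigN BCDSeries.D n) → Fin (bigN BCDSeries.D n) → ℂ)
    (hq : ∀ a b : Fin (bigN BCDSeries.D n),
      (a.val = n - 1 ∨ a.val = n ∨ b.val = n - 1 ∨ b.val = n) → q a b = r)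
    (x y : Fin (bigN BCDSeries.D n)) : q (sigD n x) (sigD n y) = q x y := by
  by_cases h : x.val = n - 1 ∨ x.val = n ∨ y.val = n - 1 ∨ y.val = n
  · rw [hq x y h, hq _ _ ?_]
    have hx : x.val < 2 * n := x.isLt
    have hy : y.val < 2 * n := y.isLt
    simp only [sigD_val]
    split_ifs <;> omega
  · push_neg at h
    obtain ⟨h1, h2, h3, h4⟩ := h
    have e1 : sigD n x = x := Fin.ext (by rw [sigD_val, if_neg h1, if_neg h2])
    have e2 : sigD n y = y := Fin.ext (by rw [sigD_val, if_neg h3, if_neg h4])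
    rw [e1, e2]

end AuxD

lemma Dtheta (n : ℕ) (s : ℂ) (a b c d : Fin (bigN BCDSeries.D n)) :
    (if sigD n b < sigD n a then (1 : ℂ) else 0) * kd b c * kd a d -
        (if sigD n c < sigD n a then (1 : ℂ) else 0) *
          s ^ (twoRho BCDSeries.D n a.val - twoRho BCDSeries.D n c.val) *
          kd b (pr a) * kd d (pr c)
      = (if b < a then (1 : ℂ) else 0) * kd b c * kd a d -
        (if c < a then (1 : ℂ) else 0) *
          s ^ (twoRho BCDSeries.D n a.val - twoRho BCDSeries.D n c.val) *
          kd b (pr a) * kd d (pr c) := by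
  have hxa : a.val < 2 * n := a.isLt
  have hxc : c.val < 2 * n := c.isLt
  by_cases hbc : b = c
  · subst hbc
    by_cases had : a = d
    · subst had
      rw [kd_self, kd_self]
      by_cases hba : b = pr a
      · have hab : a = pr b := by rw [hba, pr_pr]
        have k1 : kd b (pr a) = 1 := by rw [← hba, kd_self]
        have k2 : kd a (pr b) = 1 := by rw [← hab, kd_self]
        rw [k1, k2]
        rcases theta_flip n a b with h | h
        · rw [if_congr h rfl rfl]
        · have t1 : twoRho BCDSeries.D n a.val = 0 := by
            rcases h with ⟨h1, _⟩ | ⟨h1, _⟩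
            exacts [twoRho0D n a (Or.inl h1), twoRho0D n a (Or.inr h1)]
          have t2 : twoRho BCDSeries.D n b.val = 0 := by
            rcases h with ⟨_, h2⟩ | ⟨_, h2⟩
            exacts [twoRho0D n b (Or.inr h2), twoRho0D n b (Or.inl h2)]
          rw [t1, t2]
          norm_num
      · have k1 : kd b (pr a) = 0 := kd_of_ne hba
        have k2 : kd a (pr b) = 0 := kd_of_ne (fun e => hba (by rw [e, pr_pr]))
        rw [k1, k2]
        rcases theta_flip n a b with h | h
        · rw [if_congr h rfl rfl]
        · exfalso
          apply hba
          apply Fin.ext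
          rw [prD_val]
          rcases h with ⟨h1, h2⟩ | ⟨h1, h2⟩ <;> omega
    · rw [kd_of_ne had]
      by_cases hba : b = pr a
      · by_cases hdb : d = pr b
        · exfalso; apply had; rw [hdb, hba, pr_pr]
        · rw [kd_of_ne hdb]; ring
      · rw [kd_of_ne hba]; ring
  · rw [kd_of_ne hbc]
    by_cases hba : b = pr a
    · by_cases hdc : d = pr c
      · have hth : (if sigD n c < sigD n a then (1 : ℂ) else 0) = (if c < a then 1 else 0) := by
          rcases theta_flip n a c with h | h
          · exact if_congr h rfl rfl
          · exfalso
            apply hbc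
            rw [hba]
            apply Fin.ext
            rw [prD_val]
            rcases h with ⟨h1, h2⟩ | ⟨h1, h2⟩ <;> omega
        rw [hth]
        ring
      · rw [kd_of_ne hdc]; ring
    · rw [kd_of_ne hba]; ring

/-- for the orthogonal series (`B_n`, or `D_n` with the additional
assumption that `q_{ab} = r` whenever one of `a, b` equals `n` or `n+1`), the matrix `𝒟`
satisfies `𝒟² = Id`, `(𝒟 ⊗ 𝒟) R (𝒟 ⊗ 𝒟) = R`, and `𝒟 C 𝒟 = C`. -/
theorem statement5 (S : BCDSeries) (hS : S = BCDSeries.B ∨ S = BCDSeries.D)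
    (n : ℕ) (r s : ℂ) (hr : r ≠ 0) (hs : s ^ 2 = r)
    (q : Fin (bigN S n) → Fin (bigN S n) → ℂ)
    (hq0 : ∀ a b, q a b ≠ 0)
    (hqaa : ∀ a, q a a = r)
    (hqsym : ∀ a b, q b a * q a b = r ^ 2)
    (hqpr1 : ∀ a b, q a b * q a (pr b) = r ^ 2)
    (hqpr2 : ∀ a b, q a b * q (pr a) b = r ^ 2)
    (hqpr3 : ∀ a b, q a b = q (pr a) (pr b))
    (hqD : S = BCDSeries.D → ∀ a b : Fin (bigN S n),
      (a.val = n - 1 ∨ a.val = n ∨ b.val = n - 1 ∨ b.val = n) → q a b = r) :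
    (∀ a b : Fin (bigN S n),
      (∑ c : Fin (bigN S n), Dmat S n a c * Dmat S n c b) = kd a b) ∧
    (∀ a b c d : Fin (bigN S n),
      (∑ e : Fin (bigN S n), ∑ f : Fin (bigN S n),
       ∑ g : Fin (bigN S n), ∑ h : Fin (bigN S n),
          Dmat S n a e * Dmat S n b f * Rbcd S n r s q e f g h *
            Dmat S n g c * Dmat S n h d)
        = Rbcd S n r s q a b c d) ∧
    (∀ a b : Fin (bigN S n),
      (∑ c : Fin (bigN S n), ∑ d : Fin (bigN S n),
          Dmat S n a c * Cmet S n s c d * Dmat S n d b)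
        = Cmet S n s a b) := by
  rcases hS with rfl | rfl
  · -- series B
    refine ⟨?_, ?_, ?_⟩
    · intro a b
      rw [pair_collapse (wB n) id (fun _ => rfl) (Dmat BCDSeries.B n)
        (fun x y => DmatB n x y) a b]
      simp only [id_eq]
      linear_combination kd a b * wB_sq n a
    · intro a b c d
      rw [quad_collapse (wB n) id (fun _ => rfl) (Dmat BCDSeries.B n)
        (fun x y => DmatB n x y) (Rbcd BCDSeries.B n r s q) a b c d]
      simp only [id_eq]
      have h1 := LB1 n a b c d
      have h2 := LB2 n a b c d
      have h3 := LB1 n b a c d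
      have h4 := LB4 n a b c d
      simp only [Rbcd]
      linear_combination
        ((r / q a b + (r - 1) * kd a b + (r⁻¹ - 1) * kd b (pr a)) *
          (1 - isN2 BCDSeries.B n a.val)) * h1 + h2 +
        ((r - r⁻¹) * (if b < a then (1 : ℂ) else 0)) * h3 -
        ((r - r⁻¹) * (epsA BCDSeries.B n a.val * epsA BCDSeries.B n c.val *
          (if c < a then (1 : ℂ) else 0) *
          s ^ (twoRho BCDSeries.B n a.val - twoRho BCDSeries.B n c.val))) * h4
    · intro a b
      rw [met_collapse (wB n) id (fun _ => rfl) (Dmat BCDSeries.B n)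
        (fun x y => DmatB n x y) (Cmet BCDSeries.B n s) a b]
      simp only [id_eq]
      by_cases h : b = pr a
      · simp only [Cmet]
        have k : kd b (pr a) = 1 := by rw [h, kd_self]
        have hw : wB n b = wB n a := by rw [h, wB_pr]
        rw [k, hw]
        linear_combination (epsA BCDSeries.B n a.val *
          s ^ (-(twoRho BCDSeries.B n a.val))) * wB_sq n a
      · simp [Cmet, kd_of_ne h]
  · -- series D
    have hq := hqD rfl
    refine ⟨?_, ?_, ?_⟩
    · intro a b
      rw [pair_collapse (fun _ => (1 : ℂ)) (sigD n) (sigD_invol n) (Dmat BCDSeries.D n)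
        (DmatD n) a b]
      ring
    · intro a b c d
      rw [quad_collapse (fun _ => (1 : ℂ)) (sigD n) (sigD_invol n) (Dmat BCDSeries.D n)
        (DmatD n) (Rbcd BCDSeries.D n r s q) a b c d]
      have hqσ : ∀ x y, q (sigD n x) (sigD n y) = q x y := qsigD n r q hq
      simp only [one_mul, Rbcd, isN2D, epsAD, hqσ, sigD_pr, kd_sigD, twoRhoD_sig]
      have key := Dtheta n s a b c d
      linear_combination (r - r⁻¹) * key
    · intro a b
      rw [met_collapse (fun _ => (1 : ℂ)) (sigD n) (sigD_invol n) (Dmat BCDSeries.D n)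
        (DmatD n) (Cmet BCDSeries.D n s) a b]
      simp only [one_mul, Cmet, epsAD, sigD_pr, kd_sigD, twoRhoD_sig]
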